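/- arXiv:1904.13297 — 2 statements merged into one kernel-verified Lean document; each statement's English description precedes it below -/
import Mathlib

section
/- The matrices A₁ = [[1,2,1],[1,3,2],[1,3,3]] and A₂ = [[1,1,4],[1,2,5],[1,1,5]], viewed as linear maps of ℝ³, do not share a common proper invariant subspace: there is no ℝ-linear subspace W of ℝ³ with 0 ≠ W ≠ ℝ³ such that A₁·W ⊆ W and A₂·W ⊆ W. -/
/-!
The commutator `A₁ A₂ - A₂ A₁` has determinant `-4`, so it is invertible. In dimension three a
proper nonzero subspace `W` is a line or a plane. If `W` is a common invariant line, both maps act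
on it by scalars, so the commutator kills it. If `W` is a common invariant plane, both maps act by
scalars on the line `ℝ³ ⧸ W`, so the commutator maps `ℝ³` into `W`. Either way the commutator is
not invertible.
-/

open Module

namespace Submodule

variable {K V : Type*} [Field K] [AddCommGroup V] [Module K V]

theorem exists_smul_of_finrank_eq_one {W : Submodule K V} (hW : finrank K W = 1)
    {f : Module.End K V} (hf : W ≤ W.comap f) : ∃ a : K, ∀ x ∈ W, f x = a • x := by
  obtain ⟨a, ha⟩ := ((f.restrict hf).existsUnique_eq_smul_id_of_finrank_eq_one hW).exists
  exact ⟨a, fun x hx => congrArg Subtype.val (LinearMap.congr_fun ha ⟨x, hx⟩)⟩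

theorem exists_mkQ_smul_of_finrank_quotient_eq_one {W : Submodule K V}
    (hW : finrank K (V ⧸ W) = 1) {f : Module.End K V} (hf : W ≤ W.comap f) :
    ∃ a : K, ∀ x, W.mkQ (f x) = a • W.mkQ x := by
  obtain ⟨a, ha⟩ := ((W.mapQ W f hf).existsUnique_eq_smul_id_of_finrank_eq_one hW).exists
  exact ⟨a, fun x => LinearMap.congr_fun ha (W.mkQ x)⟩

theorem le_ker_commutator_of_finrank_eq_one {W : Submodule K V} (hW : finrank K W = 1)
    {f g : Module.End K V} (hf : W ≤ W.comap f) (hg : W ≤ W.comap g) :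
    W ≤ LinearMap.ker (f * g - g * f) := by
  obtain ⟨a, ha⟩ := exists_smul_of_finrank_eq_one hW hf
  obtain ⟨b, hb⟩ := exists_smul_of_finrank_eq_one hW hg
  intro x hx
  simp [hb x hx, ha x hx, smul_smul, mul_comm]

theorem range_commutator_le_of_finrank_quotient_eq_one {W : Submodule K V}
    (hW : finrank K (V ⧸ W) = 1) {f g : Module.End K V} (hf : W ≤ W.comap f)
    (hg : W ≤ W.comap g) : LinearMap.range (f * g - g * f) ≤ W := by
  obtain ⟨a, ha⟩ := exists_mkQ_smul_of_finrank_quotient_eq_one hW hf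
  obtain ⟨b, hb⟩ := exists_mkQ_smul_of_finrank_quotient_eq_one hW hg
  rintro _ ⟨x, rfl⟩
  rw [← W.ker_mkQ, LinearMap.mem_ker, LinearMap.sub_apply, map_sub, Module.End.mul_apply,
    Module.End.mul_apply, ha, hb, hb, ha, smul_smul, smul_smul, mul_comm, sub_self]

theorem eq_bot_or_eq_top_of_isUnit_commutator [FiniteDimensional K V] (hV : finrank K V ≤ 3)
    {f g : Module.End K V} (hfg : IsUnit (f * g - g * f)) {W : Submodule K V}
    (hf : W ≤ W.comap f) (hg : W ≤ W.comap g) : W = ⊥ ∨ W = ⊤ := by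
  by_contra! ⟨hbot, htop⟩
  have hpos : 0 < finrank K W := Nat.pos_of_ne_zero (mt Submodule.finrank_eq_zero.mp hbot)
  have hlt : finrank K W < finrank K V := Submodule.finrank_lt htop
  obtain hW | hW : finrank K W = 1 ∨ finrank K (V ⧸ W) = 1 := by
    have := W.finrank_quotient_add_finrank
    omega
  · have hker := le_ker_commutator_of_finrank_eq_one hW hf hg
    rw [(LinearMap.isUnit_iff_ker_eq_bot _).mp hfg, le_bot_iff] at hker
    exact hbot hker
  · have hrange := range_commutator_le_of_finrank_quotient_eq_one hW hf hg
    rw [(LinearMap.isUnit_iff_range_eq_top _).mp hfg, top_le_iff] at hrange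
    exact htop hrange

end Submodule

theorem Matrix.isUnit_mulVecLin_commutator {n R : Type*} [Fintype n] [DecidableEq n] [CommRing R]
    {A B : Matrix n n R} (h : IsUnit (A * B - B * A).det) :
    IsUnit (A.mulVecLin * B.mulVecLin - B.mulVecLin * A.mulVecLin) := by
  have := ((Matrix.isUnit_iff_isUnit_det _).mpr h).map (Matrix.toLinAlgEquiv' (R := R) (n := n))
  rwa [map_sub, map_mul, map_mul] at this

theorem no_common_invariant_subspace_triangle :
    ¬ ∃ W : Submodule ℝ (Fin 3 → ℝ), W ≠ ⊥ ∧ W ≠ ⊤ ∧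
      W.map (!![1, 2, 1; 1, 3, 2; 1, 3, 3] : Matrix (Fin 3) (Fin 3) ℝ).mulVecLin ≤ W ∧
      W.map (!![1, 1, 4; 1, 2, 5; 1, 1, 5] : Matrix (Fin 3) (Fin 3) ℝ).mulVecLin ≤ W := by
  rintro ⟨W, hbot, htop, h₁, h₂⟩
  refine (Submodule.eq_bot_or_eq_top_of_isUnit_commutator (by simp)
    (Matrix.isUnit_mulVecLin_commutator ?_) (Submodule.map_le_iff_le_comap.mp h₁)
    (Submodule.map_le_iff_le_comap.mp h₂)).elim hbot htop
  rw [isUnit_iff_ne_zero]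
  simp [Matrix.det_fin_three]
  norm_num
end

section
/- The matrices B₁ = [[1,2,1],[1,1,1],[1,2,2]] and B₂ = [[1,2,2],[2,4,3],[1,1,1]], viewed as linear maps of ℝ³, do not share a common proper invariant subspace: there is no ℝ-linear subspace W of ℝ³ with 0 ≠ W ≠ ℝ³ such that B₁·W ⊆ W and B₂·W ⊆ W. -/
/-!
Endomorphisms `f`, `g` preserving a line act on it by scalars, so the commutator `f g - g f`
kills it. If they preserve a hyperplane, the dual maps preserve its annihilator, which is a line,
so the commutator of the dual maps, i.e. minus the dual of `f g - g f`, is not injective either.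
A proper nonzero subspace of `ℝ³` is a line or a plane, and `B₁ B₂ - B₂ B₁` has determinant `4`.
-/

open Module

section Commutator

variable {K V : Type*} [Field K] [AddCommGroup V] [Module K V] {f g : Module.End K V}
  {W : Submodule K V}

theorem Submodule.not_injective_commutator_of_map_le_of_finrank_eq_one
    (hW : finrank K W = 1) (hf : W.map f ≤ W) (hg : W.map g ≤ W) :
    ¬ Function.Injective ⇑(f * g - g * f) := by
  have hW0 : W ≠ ⊥ := by rintro rfl; simp at hW
  obtain ⟨v, hvW, hv⟩ := W.exists_mem_ne_zero_of_ne_bot hW0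
  have hspan := eq_span_singleton_of_mem_of_finrank_eq_one hW hvW hv
  obtain ⟨a, ha⟩ := mem_span_singleton.1 (hspan ▸ hf ⟨v, hvW, rfl⟩)
  obtain ⟨b, hb⟩ := mem_span_singleton.1 (hspan ▸ hg ⟨v, hvW, rfl⟩)
  have hcomm : (f * g - g * f) v = 0 := by
    simp only [LinearMap.sub_apply, Module.End.mul_apply, ← ha, ← hb, map_smul, smul_smul,
      mul_comm a b, sub_self]
  exact fun hinj => hv (hinj (hcomm.trans (map_zero _).symm))

theorem Submodule.not_injective_commutator_of_map_le_of_finrank_add_one [FiniteDimensional K V]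
    (hW : finrank K W + 1 = finrank K V) (hf : W.map f ≤ W) (hg : W.map g ≤ W) :
    ¬ Function.Injective ⇑(f * g - g * f) := by
  have hdual_le {h : Module.End K V} (hh : W.map h ≤ W) :
      W.dualAnnihilator.map h.dualMap ≤ W.dualAnnihilator :=
    (dualAnnihilator_map_dualMap_le W h).trans
      (dualAnnihilator_anti (map_le_iff_le_comap.1 hh))
  have hline : finrank K W.dualAnnihilator = 1 := by
    have := Subspace.finrank_add_finrank_dualAnnihilator_eq W
    omega
  have hdual : f.dualMap * g.dualMap - g.dualMap * f.dualMap = -(f * g - g * f).dualMap := by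
    ext φ v
    simp
  intro hinj
  refine not_injective_commutator_of_map_le_of_finrank_eq_one hline (hdual_le hf) (hdual_le hg) ?_
  rw [hdual, LinearMap.coe_neg]
  exact neg_injective.comp
    (LinearMap.dualMap_injective_iff.2 (LinearMap.injective_iff_surjective.1 hinj))

end Commutator

theorem cassaigne_commutator_det :
    ((!![1, 2, 1; 1, 1, 1; 1, 2, 2] : Matrix (Fin 3) (Fin 3) ℝ) * !![1, 2, 2; 2, 4, 3; 1, 1, 1] -
      !![1, 2, 2; 2, 4, 3; 1, 1, 1] * !![1, 2, 1; 1, 1, 1; 1, 2, 2]).det = 4 := by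
  simp [Matrix.det_fin_three]
  norm_num

theorem Matrix.injective_mulVecLin_commutator {n : Type*} [Fintype n] [DecidableEq n]
    {K : Type*} [Field K] {A B : Matrix n n K} (h : (A * B - B * A).det ≠ 0) :
    Function.Injective ⇑(A.mulVecLin * B.mulVecLin - B.mulVecLin * A.mulVecLin) := by
  have hcoe : ⇑(A.mulVecLin * B.mulVecLin - B.mulVecLin * A.mulVecLin) =
      (A * B - B * A).mulVec := by
    ext v
    simp [Matrix.sub_mulVec, Matrix.mulVec_mulVec]
  rw [hcoe, Matrix.mulVec_injective_iff_isUnit, Matrix.isUnit_iff_isUnit_det]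
  exact h.isUnit

theorem no_common_invariant_subspace_cassaigne :
    ¬ ∃ W : Submodule ℝ (Fin 3 → ℝ), W ≠ ⊥ ∧ W ≠ ⊤ ∧
      W.map (!![1, 2, 1; 1, 1, 1; 1, 2, 2] : Matrix (Fin 3) (Fin 3) ℝ).mulVecLin ≤ W ∧
      W.map (!![1, 2, 2; 2, 4, 3; 1, 1, 1] : Matrix (Fin 3) (Fin 3) ℝ).mulVecLin ≤ W := by
  rintro ⟨W, hbot, htop, hA, hB⟩
  have hinj := Matrix.injective_mulVecLin_commutator (cassaigne_commutator_det ▸ four_ne_zero)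
  have hpos : 0 < finrank ℝ W := Nat.pos_of_ne_zero (mt Submodule.finrank_eq_zero.1 hbot)
  have hlt : finrank ℝ W < 3 := by simpa using Submodule.finrank_lt htop
  interval_cases hW : finrank ℝ W
  · exact W.not_injective_commutator_of_map_le_of_finrank_eq_one hW hA hB hinj
  · exact W.not_injective_commutator_of_map_le_of_finrank_add_one (by simp [hW]) hA hB hinj
end
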